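/- arXiv:1803.01658 — 2 statements merged into one kernel-verified Lean document; each statement's English description precedes it below -/
import Mathlib

section
/- Let f: [0,1] → ℝ and g ∈ L^1(0,1). Suppose that for every φ in a dense subset of the class L_r of 1-Lipschitz functions ℝ → [0,r] one has φ∘f ∈ W^{1,1}(0,1) and |(φ∘f)'(t)| ≤ g(t) for a.e. t ∈ [0,1]. Then f ∈ W^{1,1}(0,1) and |f'(t)| ≤ g(t) for a.e. t. -/
open MeasureTheory Set Filter intervalIntegral

/-- `f ∈ W^{1,1}(0,1)` with (a representative of) derivative `h`: `h` is integrable on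
`(0,1)` and `f` coincides a.e. on `(0,1)` with the primitive of `h`. -/
def IsW11With (f h : ℝ → ℝ) : Prop :=
  IntegrableOn h (Set.Ioo 0 1) volume ∧
  ∃ c : ℝ, ∀ᵐ x ∂(volume.restrict (Set.Ioo (0:ℝ) 1)),
    f x = c + ∫ t in (0:ℝ)..x, h t

/-- The class `L_r` of `1`-Lipschitz functions `ℝ → [0,r]`. -/
def LipClass (r : ℝ) : Set (ℝ → ℝ) :=
  {φ : ℝ → ℝ | LipschitzWith 1 φ ∧ ∀ t, φ t ∈ Set.Icc 0 r}

open ENNReal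

noncomputable def trunc (r q : ℝ) : ℝ → ℝ := fun t => min (max (t - q) 0) r

lemma trunc_mem (r q : ℝ) (hr : 0 ≤ r) : trunc r q ∈ LipClass r := by
  constructor
  · have : LipschitzWith 1 (fun t : ℝ => t - q) := by
      simpa using LipschitzWith.id.sub (LipschitzWith.const q)
    exact (this.max_const 0).min_const r
  · intro t
    exact ⟨le_min (le_max_right _ _) hr, min_le_right _ _⟩

lemma trunc_mono (r q : ℝ) : Monotone (trunc r q) := fun a b hab => by
  dsimp [trunc]; exact min_le_min (max_le_max (by linarith) le_rfl) le_rfl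

lemma min_abs_le (r : ℝ) (hr : 0 < r) (u v C : ℝ)
    (h : ∀ q : ℚ, |trunc r (q:ℝ) u - trunc r (q:ℝ) v| ≤ C) : min |u - v| r ≤ C := by
  have key : ∀ u v : ℝ, v ≤ u → (∀ q : ℚ, |trunc r (q:ℝ) u - trunc r (q:ℝ) v| ≤ C) →
      min (u - v) r ≤ C := by
    intro u v hvu h
    refine le_of_forall_pos_le_add fun ε hε => ?_
    obtain ⟨q, hq1, hq2⟩ := exists_rat_btwn (show v - ε < v by linarith)
    have h1 := h q
    have h2 : trunc r (q:ℝ) v ≤ ε := by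
      dsimp [trunc]
      refine (min_le_left _ _).trans (max_le (by linarith) hε.le)
    have h3 : min (u - v) r ≤ trunc r (q:ℝ) u := by
      dsimp [trunc]
      refine le_min ?_ ?_
      · calc min (u-v) r ≤ u - v := min_le_left _ _
          _ ≤ max (u - (q:ℝ)) 0 := le_max_of_le_left (by linarith)
      · exact min_le_right _ _
    have h4 : trunc r (q:ℝ) v ≥ 0 := le_min (le_max_right _ _) hr.le
    have := abs_le.mp h1
    linarith [this.1, this.2]
  rcases le_total v u with hvu | huv
  · have := key u v hvu h
    rwa [abs_of_nonneg (by linarith)]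
  · have := key v u huv (fun q => by rw [abs_sub_comm]; exact h q)
    rwa [abs_sub_comm, abs_of_nonneg (by linarith)]


lemma small_step (r : ℝ) (f G : ℝ → ℝ) {x y : ℝ}
    (hmin : min |f x - f y| r ≤ G x - G y) (hlt : G x - G y < r) :
    |f x - f y| ≤ G x - G y := by
  rcases le_total |f x - f y| r with h | h
  · rwa [min_eq_left h] at hmin
  · rw [min_eq_right h] at hmin; linarith
lemma chain_bound (r : ℝ) (hr : 0 < r) (G f : ℝ → ℝ) (hGc : Continuous G)
    (D : Set ℝ) (hD : D ⊆ Set.Ioo 0 1)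
    (hdense : ∀ a b : ℝ, a < b → Set.Ioo a b ⊆ Set.Ioo (0:ℝ) 1 → (D ∩ Set.Ioo a b).Nonempty)
    (hmin : ∀ x ∈ D, ∀ y ∈ D, y ≤ x → min |f x - f y| r ≤ G x - G y) :
    ∀ x ∈ D, ∀ y ∈ D, y ≤ x → |f x - f y| ≤ G x - G y := by
  have main : ∀ n : ℕ, ∀ x ∈ D, ∀ y ∈ D, y ≤ x → G x - G y < (n + 1) * r →
      |f x - f y| ≤ G x - G y := by
    intro n
    induction n with
    | zero =>
      intro x hx y hy hyx hlt
      exact small_step r f G (hmin x hx y hy hyx) (by push_cast at hlt; linarith)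
    | succ n ih =>
      intro x hx y hy hyx hlt
      rcases lt_or_ge (G x - G y) ((n + 1) * r) with hcase | hcase
      · exact ih x hx y hy hyx hcase
      have hpos : 0 < G x - G y := lt_of_lt_of_le (by positivity) hcase
      set v : ℝ := G y + (G x - G y) * ((n + 1) / (n + 2)) with hv
      have hfrac1 : (0:ℝ) < (n + 1) / (n + 2) := by positivity
      have hfrac2 : ((n:ℝ) + 1) / (n + 2) < 1 := by
        rw [div_lt_one (by positivity)]; linarith
      have hvy : G y < v := by
        rw [hv]; nlinarith [mul_pos hpos hfrac1]
      have hvx : v < G x := by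
        rw [hv]; nlinarith [mul_lt_of_lt_one_right hpos hfrac2]
      have hxv : G x - v < r := by
        have h1 : G x - v = (G x - G y) / ((n:ℝ) + 2) := by
          rw [hv]; field_simp; ring
        rw [h1, div_lt_iff₀ (by positivity)]
        push_cast at hlt ⊢; linarith
      have hvyb : v - G y < (n + 1) * r := by
        have h2 : v - G y = (G x - G y) * (((n:ℝ)+1)/((n:ℝ)+2)) := by rw [hv]; ring
        have h3 : (G x - G y) * (((n:ℝ)+1)/((n:ℝ)+2)) < (((n:ℝ)+2)*r) * (((n:ℝ)+1)/((n:ℝ)+2)) := by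
          apply mul_lt_mul_of_pos_right ?_ hfrac1
          push_cast at hlt ⊢; linarith
        have h4 : (((n:ℝ)+2)*r) * (((n:ℝ)+1)/((n:ℝ)+2)) = ((n:ℝ)+1)*r := by
          field_simp
        rw [h2]; push_cast; rw [← h4]; exact h3
      -- IVT
      have hyx' : y < x := by
        rcases eq_or_lt_of_le hyx with h | h
        · exfalso; rw [h] at hvy; linarith
        · exact h
      obtain ⟨z₀, hz₀mem, hz₀⟩ : ∃ z₀ ∈ Icc y x, G z₀ = v := by
        have := intermediate_value_Icc hyx hGc.continuousOn
        exact this ⟨hvy.le, hvx.le⟩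
      have hz₀y : y < z₀ := by
        rcases eq_or_lt_of_le hz₀mem.1 with h | h
        · exfalso; rw [← h] at hz₀; linarith
        · exact h
      have hz₀x : z₀ < x := by
        rcases eq_or_lt_of_le hz₀mem.2 with h | h
        · exfalso; rw [h] at hz₀; linarith
        · exact h
      set ε₀ : ℝ := min (r - (G x - v)) ((n + 1) * r - (v - G y)) with hε₀
      have hε₀pos : 0 < ε₀ := lt_min (by linarith) (by linarith)
      obtain ⟨δ, hδpos, hδ⟩ := Metric.continuous_iff.mp hGc z₀ ε₀ hε₀pos
      set a : ℝ := max y (z₀ - δ)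
      set b : ℝ := min x (z₀ + δ)
      have hab : a < b := by
        apply max_lt <;> [skip; skip] <;> apply lt_min <;> first
          | exact hz₀y.trans_le (by linarith)
          | linarith
      have hsub : Set.Ioo a b ⊆ Set.Ioo (0:ℝ) 1 := by
        intro t ht
        have h1 := hD hx; have h2 := hD hy
        constructor
        · exact lt_of_lt_of_le h2.1 ((le_max_left _ _).trans ht.1.le)
        · exact lt_of_le_of_lt (ht.2.le.trans (min_le_left _ _)) h1.2
      obtain ⟨z, hzD, hzab⟩ := hdense a b hab hsub
      have hzy : y ≤ z := ((le_max_left _ _).trans hzab.1.le)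
      have hzx : z ≤ x := (hzab.2.le.trans (min_le_left _ _))
      have hGz : |G z - v| < ε₀ := by
        rw [← hz₀]
        have : dist z z₀ < δ := by
          rw [Real.dist_eq, abs_lt]
          constructor
          · have := (le_max_right y (z₀ - δ)).trans_lt hzab.1; linarith
          · have := hzab.2.trans_le (min_le_right _ _); linarith
        simpa [Real.dist_eq] using hδ z this
      have habs := abs_lt.mp hGz
      have hstep1 : |f x - f z| ≤ G x - G z := by
        apply small_step r f G (hmin x hx z hzD hzx)
        have : ε₀ ≤ r - (G x - v) := min_le_left _ _
        linarith
      have hstep2 : |f z - f y| ≤ G z - G y := by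
        apply ih z hzD y hy hzy
        have : ε₀ ≤ (n + 1) * r - (v - G y) := min_le_right _ _
        push_cast; linarith
      calc |f x - f y| ≤ |f x - f z| + |f z - f y| := abs_sub_le _ _ _
        _ ≤ (G x - G z) + (G z - G y) := by linarith
        _ = G x - G y := by ring
  intro x hx y hy hyx
  obtain ⟨n, hn⟩ := exists_nat_gt ((G x - G y) / r)
  refine main n x hx y hy hyx ?_
  rw [div_lt_iff₀ hr] at hn
  push_cast; nlinarith


lemma mcshane (G f : ℝ → ℝ) (D : Set ℝ) (hne : D.Nonempty)
    (hbd : ∀ x ∈ D, ∀ y ∈ D, |f x - f y| ≤ |G x - G y|) :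
    ∃ F : ℝ → ℝ, (∀ y ∈ D, F y = f y) ∧ ∀ x y : ℝ, |F x - F y| ≤ |G x - G y| := by
  classical
  obtain ⟨y₀, hy₀⟩ := hne
  set F : ℝ → ℝ := fun x => sInf ((fun y => f y + |G x - G y|) '' D) with hF
  have hbdd : ∀ x : ℝ, ∀ y ∈ D, f y₀ - |G x - G y₀| ≤ f y + |G x - G y| := by
    intro x y hy
    have h1 : |f y - f y₀| ≤ |G y - G y₀| := hbd y hy y₀ hy₀
    have h2 : |G y - G y₀| ≤ |G y - G x| + |G x - G y₀| := abs_sub_le _ _ _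
    have h3 := (abs_le.mp h1).1
    have h4 : |G y - G x| = |G x - G y| := abs_sub_comm _ _
    linarith
  have hBdd : ∀ x : ℝ, BddBelow ((fun y => f y + |G x - G y|) '' D) := by
    intro x
    exact ⟨f y₀ - |G x - G y₀|, by rintro b ⟨y, hy, rfl⟩; exact hbdd x y hy⟩
  have hNe : ∀ x : ℝ, ((fun y => f y + |G x - G y|) '' D).Nonempty :=
    fun x => ⟨_, ⟨y₀, hy₀, rfl⟩⟩
  have hle : ∀ x : ℝ, ∀ y ∈ D, F x ≤ f y + |G x - G y| := by
    intro x y hy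
    exact csInf_le (hBdd x) ⟨y, hy, rfl⟩
  refine ⟨F, ?_, ?_⟩
  · intro y hy
    refine le_antisymm ?_ ?_
    · simpa using hle y y hy
    · refine le_csInf (hNe y) ?_
      rintro b ⟨z, hz, rfl⟩
      have h1 := (abs_le.mp (hbd y hy z hz)).2
      have h2 : |G y - G z| ≥ 0 := abs_nonneg _
      dsimp only; linarith [le_abs_self (G y - G z)]
  · have key : ∀ x₁ x₂ : ℝ, F x₁ ≤ F x₂ + |G x₁ - G x₂| := by
      intro x₁ x₂
      have : F x₁ - |G x₁ - G x₂| ≤ F x₂ := by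
        refine le_csInf (hNe x₂) ?_
        rintro b ⟨y, hy, rfl⟩
        have h1 := hle x₁ y hy
        have h2 : |G x₁ - G y| ≤ |G x₁ - G x₂| + |G x₂ - G y| := abs_sub_le _ _ _
        dsimp only; linarith
      linarith
    intro x y
    rw [abs_sub_le_iff]
    constructor <;> [have := key x y; (have := key y x; rw [abs_sub_comm])] <;> linarith


lemma density_rep (g' : ℝ → ℝ) (hg'int : Integrable g' volume)
    (hg'nn : 0 ≤ᵐ[volume] g') (F : ℝ → ℝ) (hFcont : Continuous F)
    (hFG : ∀ x y : ℝ, y ≤ x → |F x - F y| ≤ ∫ t in y..x, g' t) :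
    ∃ h : ℝ → ℝ, Integrable h volume ∧ (∀ᵐ x ∂volume, |h x| ≤ g' x) ∧
      ∀ x : ℝ, 0 ≤ x → F x = F 0 + ∫ t in (0:ℝ)..x, h t := by
  classical
  set G : ℝ → ℝ := fun x => ∫ t in (0:ℝ)..x, g' t with hGdef
  have hInt : ∀ a b : ℝ, IntervalIntegrable g' volume a b :=
    fun a b => hg'int.intervalIntegrable
  have hGsub : ∀ y x : ℝ, (∫ t in y..x, g' t) = G x - G y := by
    intro y x
    rw [hGdef]
    dsimp only
    rw [eq_sub_iff_add_eq, add_comm, integral_add_adjacent_intervals (hInt 0 y) (hInt y x)]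
  have hGcont : Continuous G := hg'int.continuous_primitive 0
  have hGmono : Monotone G := by
    intro y x hyx
    have : 0 ≤ ∫ t in y..x, g' t :=
      intervalIntegral.integral_nonneg_of_ae hyx hg'nn
    rw [hGsub] at this; linarith
  -- Stieltjes functions
  have hmono1 : Monotone (fun x => F x + G x) := by
    intro y x hyx
    have h1 := hFG x y hyx
    rw [hGsub] at h1
    have := (abs_le.mp h1).1
    dsimp only; linarith
  have hmono2 : Monotone (fun x => G x - F x) := by
    intro y x hyx
    have h1 := hFG x y hyx
    rw [hGsub] at h1
    have := (abs_le.mp h1).2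
    dsimp only; linarith
  set s₁ : StieltjesFunction ℝ :=
    ⟨fun x => F x + G x, hmono1, fun x => ((hFcont.add hGcont).continuousAt).continuousWithinAt⟩
    with hs₁
  set s₂ : StieltjesFunction ℝ :=
    ⟨fun x => G x - F x, hmono2, fun x => ((hGcont.sub hFcont).continuousAt).continuousWithinAt⟩
    with hs₂
  set ν : Measure ℝ := volume.withDensity (fun x => ENNReal.ofReal (2 * g' x)) with hν
  have h2g : Integrable (fun x => 2 * g' x) volume := hg'int.const_mul 2
  have h2gnn : 0 ≤ᵐ[volume] (fun x => 2 * g' x) := hg'nn.mono (fun x hx => by simp only [Pi.zero_apply] at hx ⊢; linarith)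
  have hνIoc : ∀ a b : ℝ, a ≤ b → ν (Ioc a b) = ENNReal.ofReal (2 * (G b - G a)) := by
    intro a b hab
    rw [hν, withDensity_apply _ measurableSet_Ioc,
      ← ofReal_integral_eq_lintegral_ofReal (h2g.integrableOn) (ae_restrict_of_ae h2gnn)]
    congr 1
    rw [MeasureTheory.integral_const_mul, ← intervalIntegral.integral_of_le hab, hGsub]
  have hsum : s₁.measure + s₂.measure = ν := by
    refine Measure.ext_of_Ioc' _ _ (fun a b hab => ?_) (fun a b hab => ?_)
    · rw [Measure.add_apply]
      exact (ENNReal.add_lt_top.mpr ⟨measure_Ioc_lt_top, measure_Ioc_lt_top⟩).ne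
    rw [Measure.add_apply, s₁.measure_Ioc, s₂.measure_Ioc, hνIoc a b hab.le]
    have h1 : (0:ℝ) ≤ F b + G b - (F a + G a) := by
      have := hmono1 hab.le; dsimp only at this; linarith
    have h2 : (0:ℝ) ≤ G b - F b - (G a - F a) := by
      have := hmono2 hab.le; dsimp only at this; linarith
    rw [hs₁, hs₂]
    dsimp only
    rw [← ENNReal.ofReal_add h1 h2]
    congr 1; ring
  -- absolute continuity and Radon-Nikodym
  have hle1 : s₁.measure ≤ ν := by rw [← hsum]; exact Measure.le_add_right le_rfl
  have hle2 : s₂.measure ≤ ν := by rw [← hsum]; exact Measure.le_add_left le_rfl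
  have hac1 : s₁.measure ≪ volume :=
    hle1.absolutelyContinuous.trans (withDensity_absolutelyContinuous volume _)
  have hac2 : s₂.measure ≪ volume :=
    hle2.absolutelyContinuous.trans (withDensity_absolutelyContinuous volume _)
  set d₁ : ℝ → ℝ≥0∞ := s₁.measure.rnDeriv volume with hd₁
  set d₂ : ℝ → ℝ≥0∞ := s₂.measure.rnDeriv volume with hd₂
  have hw1 : volume.withDensity d₁ = s₁.measure := Measure.withDensity_rnDeriv_eq _ _ hac1
  have hw2 : volume.withDensity d₂ = s₂.measure := Measure.withDensity_rnDeriv_eq _ _ hac2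
  have hd₁m : Measurable d₁ := Measure.measurable_rnDeriv _ _
  have hd₂m : Measurable d₂ := Measure.measurable_rnDeriv _ _
  have hsum' : volume.withDensity (d₁ + d₂) = ν := by
    rw [withDensity_add_left hd₁m, hw1, hw2, hsum]
  have haeeq : (d₁ + d₂) =ᵐ[volume]
      (fun x => ENNReal.ofReal (2 * g' x)) := by
    refine ae_eq_of_forall_setLIntegral_eq_of_sigmaFinite₀
      ((hd₁m.add hd₂m).aemeasurable)
      (ENNReal.measurable_ofReal.comp_aemeasurable
        (h2g.aestronglyMeasurable.aemeasurable)) (fun t ht hfin => ?_)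
    rw [← withDensity_apply _ ht, ← withDensity_apply _ ht, hsum', hν]
  have hfin1 : ∀ᵐ x ∂volume, d₁ x < ⊤ := Measure.rnDeriv_lt_top _ _
  set h : ℝ → ℝ := fun x => (d₁ x).toReal - g' x with hh
  have hbound : ∀ᵐ x ∂volume, 0 ≤ (d₁ x).toReal ∧ (d₁ x).toReal ≤ 2 * g' x := by
    filter_upwards [haeeq, hfin1, hg'nn] with x h1 h2 h3
    refine ⟨ENNReal.toReal_nonneg, ?_⟩
    have hle : d₁ x ≤ ENNReal.ofReal (2 * g' x) := by
      rw [← h1, Pi.add_apply]; exact le_self_add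
    have := ENNReal.toReal_mono ENNReal.ofReal_ne_top hle
    rwa [ENNReal.toReal_ofReal (by simp only [Pi.zero_apply] at h3; linarith)] at this
  have habs : ∀ᵐ x ∂volume, |h x| ≤ g' x := by
    filter_upwards [hbound] with x ⟨h1, h2⟩
    rw [hh]; dsimp only; rw [abs_le]; constructor <;> linarith
  -- integrability
  have hs1fin : s₁.measure univ < ⊤ := by
    refine lt_of_le_of_lt (hle1 univ) ?_
    rw [hν, withDensity_apply _ MeasurableSet.univ,
      ← ofReal_integral_eq_lintegral_ofReal (h2g.restrict) (ae_restrict_of_ae h2gnn)]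
    exact ENNReal.ofReal_lt_top
  have hd₁int : Integrable (fun x => (d₁ x).toReal) volume := by
    refine integrable_toReal_of_lintegral_ne_top hd₁m.aemeasurable ?_
    rw [← setLIntegral_univ, ← withDensity_apply _ MeasurableSet.univ, hw1]
    exact hs1fin.ne
  have hint : Integrable h volume := hd₁int.sub hg'int
  refine ⟨h, hint, habs, fun x hx => ?_⟩
  -- FTC
  have e1 : s₁.measure (Ioc 0 x) = ENNReal.ofReal ((F x + G x) - (F 0 + G 0)) :=
    s₁.measure_Ioc 0 x
  have e2 : s₁.measure (Ioc 0 x) = ∫⁻ t in Ioc 0 x, d₁ t := by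
    rw [← hw1, withDensity_apply _ measurableSet_Ioc]
  have e3 : ((∫⁻ t in Ioc 0 x, d₁ t).toReal) = ∫ t in Ioc 0 x, (d₁ t).toReal := by
    rw [integral_toReal (hd₁m.aemeasurable.restrict) (ae_restrict_of_ae hfin1)]
  have hmono0x : (0:ℝ) ≤ F x + G x - (F 0 + G 0) := by
    have := hmono1 hx; dsimp only at this; linarith
  have e4 : (F x + G x) - (F 0 + G 0) = ∫ t in Ioc 0 x, (d₁ t).toReal := by
    rw [← e3, ← e2, e1, ENNReal.toReal_ofReal hmono0x]
  have e5 : G x - G 0 = ∫ t in Ioc 0 x, g' t := by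
    rw [← intervalIntegral.integral_of_le hx, hGsub]
  have e6 : ∫ t in Ioc 0 x, h t
      = (∫ t in Ioc 0 x, (d₁ t).toReal) - ∫ t in Ioc 0 x, g' t := by
    rw [hh]
    exact integral_sub (hd₁int.restrict) (hg'int.restrict)
  rw [intervalIntegral.integral_of_le hx, e6, ← e4, ← e5]
  ring

/-- if, for every `φ` in a subset of `L_r` dense for uniform convergence,
`φ ∘ f ∈ W^{1,1}(0,1)` with `|(φ ∘ f)'| ≤ g` a.e., then `f ∈ W^{1,1}(0,1)` with `|f'| ≤ g`
a.e. -/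
theorem W11_from_truncations
    (r : ℝ) (hr : 0 < r) (f : ℝ → ℝ) (g : ℝ → ℝ)
    (hg : IntegrableOn g (Set.Ioo 0 1) volume)
    (S : Set (ℝ → ℝ)) (hS : S ⊆ LipClass r)
    (hdense : ∀ φ ∈ LipClass r, ∀ ε : ℝ, 0 < ε → ∃ ψ ∈ S, ∀ t : ℝ, |φ t - ψ t| ≤ ε)
    (hyp : ∀ φ ∈ S, ∃ h : ℝ → ℝ, IsW11With (φ ∘ f) h ∧
      ∀ᵐ t ∂(volume.restrict (Set.Ioo (0:ℝ) 1)), |h t| ≤ g t) :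
    ∃ h : ℝ → ℝ, IsW11With f h ∧
      ∀ᵐ t ∂(volume.restrict (Set.Ioo (0:ℝ) 1)), |h t| ≤ g t := by
  classical
  set g' : ℝ → ℝ := (Set.Ioo (0:ℝ) 1).indicator g with hg'def
  have hg'int : Integrable g' volume := (integrable_indicator_iff measurableSet_Ioo).mpr hg
  obtain ⟨ψ₀, hψ₀S, -⟩ := hdense (trunc r 0) (trunc_mem r 0 hr.le) 1 one_pos
  obtain ⟨h₀, -, hb₀⟩ := hyp ψ₀ hψ₀S
  have hgnn : ∀ᵐ t ∂(volume.restrict (Set.Ioo (0:ℝ) 1)), 0 ≤ g t :=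
    hb₀.mono fun t ht => (abs_nonneg _).trans ht
  have hg'nn : 0 ≤ᵐ[volume] g' := by
    have h1 := (ae_restrict_iff' measurableSet_Ioo).mp hgnn
    filter_upwards [h1] with x hx
    by_cases hmem : x ∈ Set.Ioo (0:ℝ) 1
    · simpa [hg'def, Set.indicator_of_mem hmem] using hx hmem
    · simp [hg'def, Set.indicator_of_notMem hmem]
  set G : ℝ → ℝ := fun x => ∫ t in (0:ℝ)..x, g' t with hGdef
  have hInt : ∀ a b : ℝ, IntervalIntegrable g' volume a b := fun a b => hg'int.intervalIntegrable
  have hGsub : ∀ y x : ℝ, (∫ t in y..x, g' t) = G x - G y := by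
    intro y x
    rw [hGdef]; dsimp only
    rw [eq_sub_iff_add_eq, add_comm, integral_add_adjacent_intervals (hInt 0 y) (hInt y x)]
  have hGcont : Continuous G := hg'int.continuous_primitive 0
  have hGmono : Monotone G := by
    intro y x hyx
    have h0 : 0 ≤ ∫ t in y..x, g' t := intervalIntegral.integral_nonneg_of_ae hyx hg'nn
    rw [hGsub] at h0; linarith
  have hchoice : ∀ (q : ℚ) (n : ℕ), ∃ ψ ∈ S, ∀ t : ℝ, |trunc r (q:ℝ) t - ψ t| ≤ 1/((n:ℝ)+1) :=
    fun q n => hdense (trunc r (q:ℝ)) (trunc_mem r _ hr.le) (1/((n:ℝ)+1)) (by positivity)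
  choose ψ hψS hψ using hchoice
  have hyp' := fun q n => hyp (ψ q n) (hψS q n)
  choose H hH1 hH2 using hyp'
  have hHint : ∀ q n, IntegrableOn (H q n) (Set.Ioo 0 1) volume := fun q n => (hH1 q n).1
  choose c hc using fun q n => (hH1 q n).2
  set D : Set ℝ := {x | x ∈ Set.Ioo (0:ℝ) 1 ∧ ∀ (q : ℚ) (n : ℕ),
      ψ q n (f x) = c q n + ∫ t in (0:ℝ)..x, H q n t} with hDdef
  have hDae : ∀ᵐ x ∂(volume.restrict (Set.Ioo (0:ℝ) 1)), x ∈ D := by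
    have h1 : ∀ᵐ x ∂(volume.restrict (Set.Ioo (0:ℝ) 1)), ∀ (q : ℚ) (n : ℕ),
        ψ q n (f x) = c q n + ∫ t in (0:ℝ)..x, H q n t := by
      rw [eventually_countable_forall]
      intro q
      rw [eventually_countable_forall]
      intro n
      exact hc q n
    filter_upwards [h1, ae_restrict_mem measurableSet_Ioo] with x hx1 hx2
    exact ⟨hx2, hx1⟩
  have hDdense : ∀ a b : ℝ, a < b → Set.Ioo a b ⊆ Set.Ioo (0:ℝ) 1 →
      (D ∩ Set.Ioo a b).Nonempty := by
    intro a b hab hsub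
    rw [Set.nonempty_iff_ne_empty]
    intro hemp
    have h1 : Set.Ioo a b ⊆ {x | ¬ x ∈ D} := by
      intro x hx hxD
      exact Set.eq_empty_iff_forall_notMem.mp hemp x ⟨hxD, hx⟩
    have h2 := measure_mono_null h1 (ae_iff.mp hDae)
    rw [Measure.restrict_apply' measurableSet_Ioo, Set.inter_eq_self_of_subset_left hsub,
      Real.volume_Ioo] at h2
    rw [ENNReal.ofReal_eq_zero] at h2
    linarith
  have hDsub : D ⊆ Set.Ioo 0 1 := fun x hx => hx.1
  have hmin : ∀ x ∈ D, ∀ y ∈ D, y ≤ x → min |f x - f y| r ≤ G x - G y := by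
    intro x hx y hy hyx
    refine min_abs_le r hr (f x) (f y) _ (fun q => ?_)
    refine le_of_forall_pos_le_add (fun ε hε => ?_)
    obtain ⟨n, hn⟩ := exists_nat_gt (2/ε)
    have hn' : 2/((n:ℝ)+1) < ε := by
      rw [div_lt_iff₀ (by positivity)]
      rw [div_lt_iff₀ hε] at hn
      nlinarith
    have hIi : IntervalIntegrable (H q n) volume 0 y := by
      rw [intervalIntegrable_iff_integrableOn_Ioc_of_le hy.1.1.le]
      exact (hHint q n).mono_set (fun t ht => ⟨ht.1, lt_of_le_of_lt ht.2 hy.1.2⟩)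
    have hIi2 : IntervalIntegrable (H q n) volume y x := by
      rw [intervalIntegrable_iff_integrableOn_Ioc_of_le hyx]
      exact (hHint q n).mono_set (fun t ht => ⟨lt_trans hy.1.1 ht.1, lt_of_le_of_lt ht.2 hx.1.2⟩)
    have heq : ψ q n (f x) - ψ q n (f y) = ∫ t in y..x, H q n t := by
      have e1 := hx.2 q n
      have e2 := hy.2 q n
      rw [e1, e2]
      have e3 := integral_add_adjacent_intervals hIi hIi2
      linarith [e3]
    have hbnd : |∫ t in y..x, H q n t| ≤ G x - G y := by
      have hsub2 : Set.Icc y x ⊆ Set.Ioo (0:ℝ) 1 :=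
        fun t ht => ⟨lt_of_lt_of_le hy.1.1 ht.1, lt_of_le_of_lt ht.2 hx.1.2⟩
      have h1 : (∫ t in y..x, |H q n t|) ≤ ∫ t in y..x, g' t := by
        apply intervalIntegral.integral_mono_ae_restrict hyx hIi2.abs (hInt y x)
        have h2 := ae_restrict_of_ae_restrict_of_subset hsub2 (hH2 q n)
        filter_upwards [h2, ae_restrict_mem measurableSet_Icc] with t ht1 ht2
        rw [hg'def, Set.indicator_of_mem (hsub2 ht2)]
        exact ht1
      calc |∫ t in y..x, H q n t| ≤ ∫ t in y..x, |H q n t| :=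
            intervalIntegral.abs_integral_le_integral_abs hyx
        _ ≤ ∫ t in y..x, g' t := h1
        _ = G x - G y := hGsub y x
    have hψbnd : |ψ q n (f x) - ψ q n (f y)| ≤ G x - G y := by rw [heq]; exact hbnd
    have a1 := abs_le.mp (hψ q n (f x))
    have a2 := abs_le.mp (hψ q n (f y))
    have a3 := abs_le.mp hψbnd
    obtain ⟨a11, a12⟩ := a1
    obtain ⟨a21, a22⟩ := a2
    obtain ⟨a31, a32⟩ := a3
    have hdiv : 2/((n:ℝ)+1) = 1/((n:ℝ)+1) + 1/((n:ℝ)+1) := by ring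
    rw [abs_le]
    constructor <;> linarith [hn'.le]
  have hfull := chain_bound r hr G f hGcont D hDsub hDdense hmin
  have hbd : ∀ x ∈ D, ∀ y ∈ D, |f x - f y| ≤ |G x - G y| := by
    intro x hx y hy
    rcases le_total y x with hyx | hxy
    · rw [abs_of_nonneg (by linarith [hGmono hyx] : (0:ℝ) ≤ G x - G y)]
      exact hfull x hx y hy hyx
    · rw [abs_sub_comm (f x), abs_sub_comm (G x),
        abs_of_nonneg (by linarith [hGmono hxy] : (0:ℝ) ≤ G y - G x)]
      exact hfull y hy x hx hxy
  have hDne : D.Nonempty := by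
    obtain ⟨z, hzD, _⟩ := hDdense 0 1 one_pos (subset_refl _)
    exact ⟨z, hzD⟩
  obtain ⟨F, hFD, hFlip⟩ := mcshane G f D hDne hbd
  have hFcont : Continuous F := by
    rw [Metric.continuous_iff]
    intro x ε hε
    obtain ⟨δ, hδpos, hδ⟩ := Metric.continuous_iff.mp hGcont x ε hε
    exact ⟨δ, hδpos, fun y hy =>
      lt_of_le_of_lt (by simpa [Real.dist_eq] using hFlip y x) (hδ y hy)⟩
  have hFG : ∀ x y : ℝ, y ≤ x → |F x - F y| ≤ ∫ t in y..x, g' t := by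
    intro x y hyx
    rw [hGsub]
    calc |F x - F y| ≤ |G x - G y| := hFlip x y
      _ = G x - G y := abs_of_nonneg (by linarith [hGmono hyx])
  obtain ⟨h, hint, habs, hrep⟩ := density_rep g' hg'int hg'nn F hFcont hFG
  refine ⟨h, ⟨hint.integrableOn, F 0, ?_⟩, ?_⟩
  · filter_upwards [hDae] with x hx
    rw [← hFD x hx]
    exact hrep x hx.1.1.le
  · filter_upwards [ae_restrict_of_ae habs, ae_restrict_mem measurableSet_Ioo] with t ht1 ht2
    rwa [hg'def, Set.indicator_of_mem ht2] at ht1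
end

section
/- Let μ be doubling, ρ a doubling kernel, p ≥ 1, r ∈ (0,1], and u measurable. If A_δ := ∬_{{|u(x)−u(y)|>δ}} δ^p/(ρ(x,y)d(x,y)^p) dμdμ satisfies sup_{0<δ<1} A_δ ≤ C, then for every ε > 0, (ε/(p+ε))·∬_{X×X} min(|u(x)−u(y)|, r)^{p+ε}/(ρ(x,y)·d(x,y)^p) dμ(x)dμ(y) ≤ C. -/
open MeasureTheory Metric Filter ENNReal Set Topology

/-- The support of a measure on a metric space. -/
def measSupport {X : Type*} [MetricSpace X] [MeasurableSpace X] (μ : Measure X) : Set X :=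
  {x : X | ∀ r : ℝ, 0 < r → 0 < μ (ball x r)}

/-- The Nguyen-type nonlocal functional
`A_δ = ∬_{|u(x)-u(y)| > δ} δ^p/(ρ(x,y) d(x,y)^p) dμ dμ`. -/
noncomputable def nguyenFunctional {X : Type*} [MetricSpace X] [MeasurableSpace X]
    (μ : Measure X) (ρ : X → X → ℝ≥0∞) (p : ℝ) (u : X → ℝ) (δ : ℝ) : ℝ≥0∞ :=
  ∫⁻ z in {z : X × X | δ < |u z.1 - u z.2|},
    ENNReal.ofReal (δ ^ p) / (ρ z.1 z.2 * ENNReal.ofReal (dist z.1 z.2 ^ p)) ∂(μ.prod μ)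

open Filter Set Topology

/-- Slope limit: `(1 - θ^c)/(1-θ) → c` as `θ → 1` within `Ioo 0 1`. -/
lemma slope_rpow_lim (c : ℝ) :
    Tendsto (fun θ : ℝ => (1 - θ ^ c) / (1 - θ)) (𝓝[Set.Ioo (0:ℝ) 1] 1) (𝓝 c) := by
  have hd : HasDerivAt (fun x : ℝ => x ^ c) (c * (1:ℝ) ^ (c - 1)) 1 :=
    Real.hasDerivAt_rpow_const (Or.inl one_ne_zero)
  rw [Real.one_rpow, mul_one] at hd
  have hs := hasDerivAt_iff_tendsto_slope.mp hd
  have heq : (fun θ : ℝ => (1 - θ ^ c) / (1 - θ)) = slope (fun x : ℝ => x ^ c) 1 := by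
    funext θ
    rw [slope_def_field, Real.one_rpow, ← neg_div_neg_eq]
    ring_nf
  rw [heq]
  exact hs.mono_left (nhdsWithin_mono 1 (fun x hx => ne_of_lt hx.2))
open Filter Set Topology ENNReal

/-- Geometric layer-cake pointwise bound. -/
lemma layer_bound {θ r t q : ℝ} (hθ0 : 0 < θ) (hθ1 : θ < 1) (hr : 0 < r)
    (hq : 0 < q) (ht : 0 ≤ t) :
    ENNReal.ofReal (min t r ^ q) ≤
      ∑' j : ℕ, Set.indicator (Set.Ioi (r * θ ^ (j+1)))
        (fun _ => ENNReal.ofReal ((r * θ ^ j) ^ q - (r * θ ^ (j+1)) ^ q)) t := by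
  rcases eq_or_lt_of_le ht with h0 | h0
  · rw [← h0, min_eq_left hr.le, Real.zero_rpow hq.ne', ENNReal.ofReal_zero]
    exact zero_le
  have hex : ∃ j : ℕ, r * θ ^ (j+1) < t := by
    obtain ⟨n, hn⟩ := exists_pow_lt_of_lt_one (div_pos h0 hr) hθ1
    refine ⟨n, ?_⟩
    have h1 : θ ^ (n+1) ≤ θ ^ n := pow_le_pow_of_le_one hθ0.le hθ1.le (Nat.le_succ n)
    calc r * θ ^ (n+1) ≤ r * θ ^ n := by nlinarith
    _ < r * (t / r) := by nlinarith
    _ = t := by field_simp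
  set J := Nat.find hex with hJdef
  have hJ : r * θ ^ (J+1) < t := Nat.find_spec hex
  have hminJ : min t r ≤ r * θ ^ J := by
    rcases Nat.eq_zero_or_pos J with h | h
    · rw [h]; simpa using min_le_right t r
    · obtain ⟨K, hK⟩ := Nat.exists_eq_succ_of_ne_zero h.ne'
      have hKm := Nat.find_min hex (m := K) (by omega)
      push_neg at hKm
      rw [hK]
      exact le_trans (min_le_left t r) (by simpa [Nat.succ_eq_add_one] using hKm)
  set g : ℕ → ℝ := fun j => (r * θ ^ j) ^ q with hg
  have hganti : ∀ j, g (j+1) ≤ g j := by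
    intro j
    apply Real.rpow_le_rpow (by positivity) _ hq.le
    have : θ ^ (j+1) ≤ θ ^ j := pow_le_pow_of_le_one hθ0.le hθ1.le (Nat.le_succ j)
    nlinarith
  have htel : ∀ N : ℕ, ENNReal.ofReal (g J - g (J+N)) ≤
      ∑' j : ℕ, Set.indicator (Set.Ioi (r * θ ^ (j+1)))
        (fun _ => ENNReal.ofReal (g j - g (j+1))) t := by
    intro N
    have hsum : ∑ j ∈ Finset.Ico J (J+N), ENNReal.ofReal (g j - g (j+1)) ≤
        ∑' j : ℕ, Set.indicator (Set.Ioi (r * θ ^ (j+1)))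
          (fun _ => ENNReal.ofReal (g j - g (j+1))) t := by
      refine le_trans (le_of_eq ?_) (ENNReal.sum_le_tsum (Finset.Ico J (J+N)))
      apply Finset.sum_congr rfl
      intro j hj
      rw [Finset.mem_Ico] at hj
      have hjJ : θ ^ (j+1) ≤ θ ^ (J+1) :=
        pow_le_pow_of_le_one hθ0.le hθ1.le (Nat.succ_le_succ hj.1)
      have htmem : t ∈ Set.Ioi (r * θ ^ (j+1)) := by
        simp only [Set.mem_Ioi]
        nlinarith
      rw [Set.indicator_of_mem htmem]
    refine le_trans (le_of_eq ?_) hsum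
    rw [← ENNReal.ofReal_sum_of_nonneg (fun j _ => sub_nonneg.mpr (hganti j))]
    congr 1
    rw [Finset.sum_Ico_eq_sum_range]
    simp only [Nat.add_sub_cancel_left]
    have heq : ∀ i ∈ Finset.range N, g (J + i) - g (J + i + 1)
        = (fun i => g (J + i)) i - (fun i => g (J + i)) (i+1) := by
      intro i _
      simp [Nat.add_assoc]
    rw [Finset.sum_congr rfl heq, Finset.sum_range_sub' (fun i => g (J + i)) N]
    simp
  have hlim : Tendsto (fun N : ℕ => ENNReal.ofReal (g J - g (J+N))) atTop
      (𝓝 (ENNReal.ofReal (g J))) := by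
    have h2 : Tendsto (fun N : ℕ => θ ^ (J + N)) atTop (𝓝 0) := by
      have := (tendsto_pow_atTop_nhds_zero_of_lt_one hθ0.le hθ1).comp
        (tendsto_add_atTop_nat J)
      simpa [Function.comp_def, add_comm] using this
    have h4 : Tendsto (fun N : ℕ => r * θ ^ (J + N)) atTop (𝓝 0) := by
      simpa using h2.const_mul r
    have h3 : Tendsto (fun N : ℕ => g (J + N)) atTop (𝓝 0) := by
      have hc : ContinuousAt (fun y : ℝ => y ^ q) 0 :=
        Real.continuousAt_rpow_const 0 q (Or.inr hq.le)
      have := hc.tendsto.comp h4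
      simpa [hg, Function.comp_def, Real.zero_rpow hq.ne'] using this
    have h5 : Tendsto (fun N : ℕ => g J - g (J + N)) atTop (𝓝 (g J - 0)) :=
      tendsto_const_nhds.sub h3
    rw [sub_zero] at h5
    exact (ENNReal.continuous_ofReal.tendsto _).comp h5
  have hfinal := le_of_tendsto hlim (Eventually.of_forall htel)
  refine le_trans ?_ hfinal
  apply ENNReal.ofReal_le_ofReal
  exact Real.rpow_le_rpow (le_min h0.le hr.le) hminJ hq.le

lemma ratio_eq {θ r p ε : ℝ} (hθ0 : 0 < θ) (hr : 0 < r) (j : ℕ) :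
    ((r * θ ^ j) ^ (p+ε) - (r * θ ^ (j+1)) ^ (p+ε)) / (r * θ ^ (j+1)) ^ p
      = (r ^ ε * (1 - θ ^ (p+ε)) / θ ^ p) * (θ ^ ε) ^ j := by
  have hA0 : (0:ℝ) < θ ^ j := pow_pos hθ0 j
  have hA : (θ ^ j : ℝ) ^ ε = (θ ^ ε) ^ j := by
    rw [← Real.rpow_natCast θ j, ← Real.rpow_natCast (θ ^ ε) j,
      ← Real.rpow_mul hθ0.le, ← Real.rpow_mul hθ0.le, mul_comm]
  have h1 : (r * θ ^ j) ^ (p+ε) = r ^ p * r ^ ε * ((θ ^ j) ^ p * (θ ^ j) ^ ε) := by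
    rw [Real.mul_rpow hr.le hA0.le, Real.rpow_add hr, Real.rpow_add hA0]
  have h2 : (r * θ ^ (j+1)) ^ (p+ε)
      = r ^ p * r ^ ε * ((θ ^ j) ^ p * (θ ^ j) ^ ε) * (θ ^ p * θ ^ ε) := by
    rw [pow_succ, ← mul_assoc, Real.mul_rpow (by positivity) hθ0.le,
      Real.mul_rpow hr.le hA0.le, Real.rpow_add hr, Real.rpow_add hA0,
      Real.rpow_add hθ0]
  have h3 : (r * θ ^ (j+1)) ^ p = r ^ p * (θ ^ j) ^ p * θ ^ p := by
    rw [pow_succ, ← mul_assoc, Real.mul_rpow (by positivity) hθ0.le,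
      Real.mul_rpow hr.le hA0.le]
  rw [h1, h2, h3, ← hA, Real.rpow_add hθ0 p ε]
  have hrp : (0:ℝ) < r ^ p := Real.rpow_pos_of_pos hr p
  have hAp : (0:ℝ) < (θ ^ j) ^ p := Real.rpow_pos_of_pos hA0 p
  have hθp : (0:ℝ) < θ ^ p := Real.rpow_pos_of_pos hθ0 p
  field_simp

/-- if `sup_{0<δ<1} A_δ ≤ C`, then for every `ε > 0`,
`(ε/(p+ε)) ∬ min(|u(x)-u(y)|, r)^{p+ε}/(ρ(x,y) d(x,y)^p) dμ dμ ≤ C`. -/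
theorem truncated_energy_from_nguyen
    {X : Type*} [MetricSpace X] [MeasurableSpace X] [BorelSpace X]
    (μ : Measure X) (cD : ℝ≥0∞) (Cρ : ℝ≥0∞) (hCρ : 0 < Cρ) (hCρ' : Cρ ≠ ⊤)
    (hdoub : ∀ x ∈ measSupport μ, ∀ r : ℝ, 0 < r → μ (ball x (2 * r)) ≤ cD * μ (ball x r))
    (ρ : X → X → ℝ≥0∞)
    (hker : ∀ x ∈ measSupport μ, ∀ y ∈ measSupport μ,
      Cρ⁻¹ * μ (ball x (dist x y)) ≤ ρ x y ∧ ρ x y ≤ Cρ * μ (ball x (dist x y)))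
    (p : ℝ) (hp : 1 ≤ p) (r : ℝ) (hr : r ∈ Set.Ioc (0:ℝ) 1)
    (u : X → ℝ) (hu : Measurable u)
    (C : ℝ≥0∞) (hC : ∀ δ ∈ Set.Ioo (0:ℝ) 1, nguyenFunctional μ ρ p u δ ≤ C)
    (ε : ℝ) (hε : 0 < ε) :
    ENNReal.ofReal (ε / (p + ε)) *
      ∫⁻ z, ENNReal.ofReal (min |u z.1 - u z.2| r ^ (p + ε)) /
        (ρ z.1 z.2 * ENNReal.ofReal (dist z.1 z.2 ^ p)) ∂(μ.prod μ)
      ≤ C := by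
  obtain ⟨hr0, hr1⟩ := hr
  have hq : 0 < p + ε := by linarith
  have hΔm : Measurable fun z : X × X => |u z.1 - u z.2| :=
    ((hu.comp measurable_fst).sub (hu.comp measurable_snd)).abs
  obtain ⟨G, hGm, hGle, hGeq⟩ := exists_measurable_le_lintegral_eq (μ.prod μ)
    (fun z : X × X => ENNReal.ofReal (min |u z.1 - u z.2| r ^ (p + ε)) /
      (ρ z.1 z.2 * ENNReal.ofReal (dist z.1 z.2 ^ p)))
  rw [show (∫⁻ z, ENNReal.ofReal (min |u z.1 - u z.2| r ^ (p + ε)) /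
        (ρ z.1 z.2 * ENNReal.ofReal (dist z.1 z.2 ^ p)) ∂(μ.prod μ))
      = ∫⁻ z, G z ∂(μ.prod μ) from hGeq]
  set a : X × X → ℝ≥0∞ :=
    fun z => ENNReal.ofReal (min |u z.1 - u z.2| r ^ (p + ε)) with hadef
  have ham : Measurable a := by
    apply Measurable.ennreal_ofReal
    exact (hΔm.min measurable_const).pow_const _
  set g' : X × X → ℝ≥0∞ := fun z => G z * (a z)⁻¹ with hg'def
  have hg'm : Measurable g' := hGm.mul ham.inv
  -- G ≤ a * g'
  have hGag : ∀ z, G z ≤ a z * g' z := by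
    intro z
    by_cases h : a z = 0
    · have hG0 : G z = 0 := by
        have := hGle z
        simp only [hadef] at h
        simpa [h, ENNReal.zero_div] using this
      simp [hG0]
    · rw [hg'def]
      rw [← mul_assoc, mul_comm (a z) (G z), mul_assoc,
        ENNReal.mul_inv_cancel h ENNReal.ofReal_ne_top, mul_one]
  -- g' ≤ W⁻¹
  have hg'W : ∀ z, g' z ≤ (ρ z.1 z.2 * ENNReal.ofReal (dist z.1 z.2 ^ p))⁻¹ := by
    intro z
    by_cases h : a z = 0
    · have hG0 : G z = 0 := by
        have := hGle z
        simp only [hadef] at h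
        simpa [h, ENNReal.zero_div] using this
      simp [hg'def, hG0]
    · have h1 : G z ≤ a z * (ρ z.1 z.2 * ENNReal.ofReal (dist z.1 z.2 ^ p))⁻¹ := by
        simpa [div_eq_mul_inv] using hGle z
      calc g' z = G z * (a z)⁻¹ := rfl
        _ ≤ a z * (ρ z.1 z.2 * ENNReal.ofReal (dist z.1 z.2 ^ p))⁻¹ * (a z)⁻¹ :=
            mul_le_mul_left h1 _
        _ = (ρ z.1 z.2 * ENNReal.ofReal (dist z.1 z.2 ^ p))⁻¹ *
            (a z * (a z)⁻¹) := by ring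
        _ = (ρ z.1 z.2 * ENNReal.ofReal (dist z.1 z.2 ^ p))⁻¹ := by
            rw [ENNReal.mul_inv_cancel h ENNReal.ofReal_ne_top, mul_one]
  -- Key bound for each θ
  have key : ∀ θ ∈ Set.Ioo (0:ℝ) 1,
      ENNReal.ofReal (ε / (p + ε)) * ∫⁻ z, G z ∂(μ.prod μ) ≤
      C * ENNReal.ofReal (ε / (p + ε) *
        (r ^ ε * (1 - θ ^ (p + ε)) / θ ^ p * (1 - θ ^ ε)⁻¹)) := by
    intro θ ⟨hθ0, hθ1⟩
    set w : ℕ → ℝ≥0∞ :=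
      fun j => ENNReal.ofReal ((r * θ ^ j) ^ (p+ε) - (r * θ ^ (j+1)) ^ (p+ε)) with hwdef
    set S : ℕ → Set (X × X) := fun j => {z | r * θ ^ (j+1) < |u z.1 - u z.2|} with hSdef
    have hSm : ∀ j, MeasurableSet (S j) :=
      fun j => measurableSet_lt measurable_const hΔm
    have hδ'mem : ∀ j : ℕ, r * θ ^ (j+1) ∈ Set.Ioo (0:ℝ) 1 := by
      intro j
      constructor
      · positivity
      · have h1 : θ ^ (j+1) < 1 := pow_lt_one₀ hθ0.le hθ1 (Nat.succ_ne_zero j)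
        have h2 : r * θ ^ (j+1) ≤ θ ^ (j+1) :=
          mul_le_of_le_one_left (by positivity) hr1
        linarith
    -- step 1: integral of a * g' bounded by sum
    have step1 : ∫⁻ z, G z ∂(μ.prod μ) ≤
        ∑' j : ℕ, ∫⁻ z, (S j).indicator (fun _ => w j) z * g' z ∂(μ.prod μ) := by
      calc ∫⁻ z, G z ∂(μ.prod μ) ≤ ∫⁻ z, a z * g' z ∂(μ.prod μ) :=
            lintegral_mono hGag
        _ ≤ ∫⁻ z, ∑' j : ℕ, (S j).indicator (fun _ => w j) z * g' z ∂(μ.prod μ) := by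
            apply lintegral_mono
            intro z
            have hlb := layer_bound hθ0 hθ1 hr0 hq (abs_nonneg (u z.1 - u z.2))
            have hind : ∀ j : ℕ, Set.indicator (Set.Ioi (r * θ ^ (j+1)))
                (fun _ => w j) (|u z.1 - u z.2|) = (S j).indicator (fun _ => w j) z := by
              intro j
              by_cases h : r * θ ^ (j+1) < |u z.1 - u z.2| <;>
                simp [Set.indicator_apply, Set.mem_Ioi, hSdef, h]
            calc a z * g' z ≤ (∑' j : ℕ, (S j).indicator (fun _ => w j) z) * g' z := by
                  apply mul_le_mul_left
                  refine le_trans hlb (le_of_eq (tsum_congr hind))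
              _ = ∑' j : ℕ, (S j).indicator (fun _ => w j) z * g' z :=
                  ENNReal.tsum_mul_right.symm
        _ = ∑' j : ℕ, ∫⁻ z, (S j).indicator (fun _ => w j) z * g' z ∂(μ.prod μ) := by
            apply lintegral_tsum
            intro j
            exact ((measurable_const.indicator (hSm j)).mul hg'm).aemeasurable
    -- step 2: each term bounded
    have step2 : ∀ j : ℕ, ∫⁻ z, (S j).indicator (fun _ => w j) z * g' z ∂(μ.prod μ) ≤
        w j * (C / ENNReal.ofReal ((r * θ ^ (j+1)) ^ p)) := by
      intro j
      have hc0 : (0:ℝ) < (r * θ ^ (j+1)) ^ p := Real.rpow_pos_of_pos (by positivity) p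
      have hcne : ENNReal.ofReal ((r * θ ^ (j+1)) ^ p) ≠ 0 := by
        simp [ENNReal.ofReal_eq_zero, not_le, hc0]
      have heq1 : ∫⁻ z, (S j).indicator (fun _ => w j) z * g' z ∂(μ.prod μ)
          = w j * ∫⁻ z in S j, g' z ∂(μ.prod μ) := by
        rw [← lintegral_const_mul' (w j) _ ENNReal.ofReal_ne_top,
          ← lintegral_indicator (hSm j) _]
        congr 1
        funext z
        by_cases h : z ∈ S j
        · rw [Set.indicator_of_mem h, Set.indicator_of_mem h]
        · rw [Set.indicator_of_notMem h, Set.indicator_of_notMem h, zero_mul]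
      rw [heq1]
      apply mul_le_mul_right
      rw [ENNReal.le_div_iff_mul_le (Or.inl hcne) (Or.inl ENNReal.ofReal_ne_top)]
      rw [mul_comm, ← lintegral_const_mul' _ _ ENNReal.ofReal_ne_top]
      have hbound : ∫⁻ z in S j, ENNReal.ofReal ((r * θ ^ (j+1)) ^ p) * g' z ∂(μ.prod μ)
          ≤ nguyenFunctional μ ρ p u (r * θ ^ (j+1)) := by
        apply lintegral_mono
        intro z
        dsimp only
        rw [div_eq_mul_inv]
        exact mul_le_mul_right (hg'W z) _
      exact le_trans hbound (hC _ (hδ'mem j))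
    -- step 3: sum the geometric series
    have hθε1 : θ ^ ε < 1 := Real.rpow_lt_one hθ0.le hθ1 hε
    have hθεpos : (0:ℝ) < θ ^ ε := Real.rpow_pos_of_pos hθ0 ε
    have hK0 : (0:ℝ) ≤ r ^ ε * (1 - θ ^ (p+ε)) / θ ^ p := by
      have h1 : θ ^ (p+ε) < 1 := Real.rpow_lt_one hθ0.le hθ1 hq
      have h2 : (0:ℝ) < θ ^ p := Real.rpow_pos_of_pos hθ0 p
      have h3 : (0:ℝ) ≤ r ^ ε := (Real.rpow_pos_of_pos hr0 ε).le
      exact div_nonneg (mul_nonneg h3 (by linarith)) h2.le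
    have hwnn : ∀ j : ℕ, (0:ℝ) ≤ (r * θ ^ j) ^ (p+ε) - (r * θ ^ (j+1)) ^ (p+ε) := by
      intro j
      have hpow : θ ^ (j+1) ≤ θ ^ j := pow_le_pow_of_le_one hθ0.le hθ1.le (Nat.le_succ j)
      have hle : r * θ ^ (j+1) ≤ r * θ ^ j := by nlinarith
      have := Real.rpow_le_rpow (by positivity) hle hq.le
      linarith
    have step3 : ∑' j : ℕ, w j * (C / ENNReal.ofReal ((r * θ ^ (j+1)) ^ p))
        = C * ENNReal.ofReal (r ^ ε * (1 - θ ^ (p+ε)) / θ ^ p) *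
          (1 - ENNReal.ofReal (θ ^ ε))⁻¹ := by
      have hterm : ∀ j : ℕ, w j * (C / ENNReal.ofReal ((r * θ ^ (j+1)) ^ p))
          = C * (ENNReal.ofReal (r ^ ε * (1 - θ ^ (p+ε)) / θ ^ p) *
            (ENNReal.ofReal (θ ^ ε)) ^ j) := by
        intro j
        have hc0 : (0:ℝ) < (r * θ ^ (j+1)) ^ p := Real.rpow_pos_of_pos (by positivity) p
        rw [hwdef, div_eq_mul_inv, ← mul_assoc, mul_comm (w j) C, mul_assoc]
        congr 1
        rw [← ENNReal.ofReal_inv_of_pos hc0, hwdef,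
          ← ENNReal.ofReal_mul (hwnn j),
          ← div_eq_mul_inv, ratio_eq hθ0 hr0 j,
          ENNReal.ofReal_mul hK0, ENNReal.ofReal_pow hθεpos.le]
      rw [tsum_congr hterm, ENNReal.tsum_mul_left, ENNReal.tsum_mul_left,
        ENNReal.tsum_geometric, mul_assoc]
    -- combine
    calc ENNReal.ofReal (ε / (p + ε)) * ∫⁻ z, G z ∂(μ.prod μ)
        ≤ ENNReal.ofReal (ε / (p + ε)) *
          ∑' j : ℕ, w j * (C / ENNReal.ofReal ((r * θ ^ (j+1)) ^ p)) := by
          apply mul_le_mul_right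
          exact le_trans step1 (ENNReal.tsum_le_tsum step2)
      _ = C * ENNReal.ofReal (ε / (p + ε) *
          (r ^ ε * (1 - θ ^ (p + ε)) / θ ^ p * (1 - θ ^ ε)⁻¹)) := by
          rw [step3]
          have h1 : (1:ℝ≥0∞) - ENNReal.ofReal (θ ^ ε) = ENNReal.ofReal (1 - θ ^ ε) := by
            rw [ENNReal.ofReal_sub 1 hθεpos.le, ENNReal.ofReal_one]
          rw [h1, ← ENNReal.ofReal_inv_of_pos (by linarith)]
          rw [ENNReal.ofReal_mul (div_nonneg hε.le hq.le), ENNReal.ofReal_mul hK0]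
          ring
  -- limit as θ → 1⁻
  have hne : (𝓝[Set.Ioo (0:ℝ) 1] (1:ℝ)).NeBot := by
    apply mem_closure_iff_nhdsWithin_neBot.mp
    rw [closure_Ioo (by norm_num : (0:ℝ) ≠ 1)]
    exact ⟨zero_le_one, le_rfl⟩
  have hφ : Tendsto (fun θ : ℝ => ε / (p + ε) *
      (r ^ ε * (1 - θ ^ (p + ε)) / θ ^ p * (1 - θ ^ ε)⁻¹))
      (𝓝[Set.Ioo (0:ℝ) 1] 1) (𝓝 (r ^ ε)) := by
    have T1 := slope_rpow_lim (p + ε)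
    have T2 := slope_rpow_lim ε
    have T3 : Tendsto (fun θ : ℝ => θ ^ p) (𝓝[Set.Ioo (0:ℝ) 1] 1) (𝓝 1) := by
      have hc : ContinuousAt (fun θ : ℝ => θ ^ p) 1 :=
        Real.continuousAt_rpow_const 1 p (Or.inl one_ne_zero)
      have h4 : Tendsto (fun θ : ℝ => θ ^ p) (𝓝[Set.Ioo (0:ℝ) 1] 1) (𝓝 ((1:ℝ) ^ p)) :=
        hc.tendsto.mono_left nhdsWithin_le_nhds
      simpa [Real.one_rpow] using h4
    have Tmain : Tendsto (fun θ : ℝ => ε / (p + ε) * r ^ ε *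
        ((1 - θ ^ (p + ε)) / (1 - θ)) / ((1 - θ ^ ε) / (1 - θ)) / θ ^ p)
        (𝓝[Set.Ioo (0:ℝ) 1] 1) (𝓝 (ε / (p + ε) * r ^ ε * (p + ε) / ε / 1)) :=
      ((tendsto_const_nhds.mul T1).div T2 hε.ne').div T3 one_ne_zero
    have hval : ε / (p + ε) * r ^ ε * (p + ε) / ε / 1 = r ^ ε := by
      field_simp
    rw [hval] at Tmain
    apply Tmain.congr'
    filter_upwards [eventually_mem_nhdsWithin] with θ hθ
    obtain ⟨hθ0, hθ1⟩ := hθ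
    have h1θ : (1:ℝ) - θ ≠ 0 := by
      intro h; linarith
    have h2 : (1:ℝ) - θ ^ ε ≠ 0 := by
      have := Real.rpow_lt_one hθ0.le hθ1 hε
      intro h; linarith
    have h3 : (θ:ℝ) ^ p ≠ 0 := (Real.rpow_pos_of_pos hθ0 p).ne'
    field_simp
  have hten : Tendsto (fun θ : ℝ => C * ENNReal.ofReal (ε / (p + ε) *
      (r ^ ε * (1 - θ ^ (p + ε)) / θ ^ p * (1 - θ ^ ε)⁻¹)))
      (𝓝[Set.Ioo (0:ℝ) 1] 1) (𝓝 (C * ENNReal.ofReal (r ^ ε))) := by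
    apply ENNReal.Tendsto.const_mul
    · exact (ENNReal.continuous_ofReal.tendsto _).comp hφ
    · left
      simp only [ne_eq, ENNReal.ofReal_eq_zero, not_le]
      exact Real.rpow_pos_of_pos hr0 ε
  have hfin : ENNReal.ofReal (ε / (p + ε)) * ∫⁻ z, G z ∂(μ.prod μ)
      ≤ C * ENNReal.ofReal (r ^ ε) :=
    ge_of_tendsto hten (eventually_mem_nhdsWithin.mono fun θ hθ => key θ hθ)
  refine le_trans hfin ?_
  calc C * ENNReal.ofReal (r ^ ε) ≤ C * 1 := by
        apply mul_le_mul_right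
        rw [ENNReal.ofReal_le_one]
        exact Real.rpow_le_one hr0.le hr1 hε.le
    _ = C := mul_one C
end
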